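/- arXiv:1411.6732 — 3 statements merged into one kernel-verified Lean document; each statement's English description precedes it below -/
import Mathlib

section
/- The stabilizer of the identity in the group of all colour-preserving automorphisms of a connected Cayley graph Cay(G;S) on a finite group G is a 2-group. -/
/-! A colour-preserving permutation `ψ` fixing `x` either fixes `x * s` or swaps `x * s` and
`x * s⁻¹`, so `ψ ^ 2` fixes every neighbour of a fixed point of `ψ`. Starting from `φ 1 = 1` and
walking along generators, each vertex is fixed by some `φ ^ 2 ^ k`; as `G` is finite, a single
`k` works for all vertices. -/

/-- A map `φ` is colour-preserving for the Cayley graph `Cay(G;S)` if it sends each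
edge `x — xs` (coloured `{s,s⁻¹}`) to an edge of the same colour. -/
def ColourPreserving {G : Type*} [Group G] (S : Set G) (φ : G → G) : Prop :=
  ∀ x : G, ∀ s ∈ S, φ (x * s) = φ x * s ∨ φ (x * s) = φ x * s⁻¹

/-- A map `φ` is colour-permuting for `Cay(G;S)` if it permutes the edge colours:
there is a permutation `π` of `S` with `π (s⁻¹) = (π s)⁻¹` and
`φ(xs) ∈ {φ(x) π(s)^{±1}}`. -/
def ColourPermuting {G : Type*} [Group G] (S : Set G) (φ : G → G) : Prop :=
  ∃ π : G → G, Set.BijOn π S S ∧ (∀ s ∈ S, π s⁻¹ = (π s)⁻¹) ∧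
    ∀ x : G, ∀ s ∈ S, φ (x * s) = φ x * π s ∨ φ (x * s) = φ x * (π s)⁻¹

/-- `φ : G → G` is affine if it is a group automorphism composed with a left translation. -/
def IsAffineMap {G : Type*} [Group G] (φ : G → G) : Prop :=
  ∃ (α : G ≃* G) (g : G), ∀ x, φ x = α (g * x)

/-- `G` is CCA if every colour-preserving automorphism of every connected Cayley graph
on `G` is affine. -/
def IsCCA (G : Type*) [Group G] : Prop :=
  ∀ S : Set G, S⁻¹ = S → Subgroup.closure S = ⊤ →
    ∀ φ : Equiv.Perm G, ColourPreserving S ⇑φ → IsAffineMap ⇑φ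

/-- `G` is strongly CCA if every colour-permuting automorphism of every connected
Cayley graph on `G` is affine. -/
def IsStronglyCCA (G : Type*) [Group G] : Prop :=
  ∀ S : Set G, S⁻¹ = S → Subgroup.closure S = ⊤ →
    ∀ φ : Equiv.Perm G, ColourPermuting S ⇑φ → IsAffineMap ⇑φ

open Equiv

theorem Equiv.Perm.exists_pow_two_pow_eq_one_of_forall_apply {α : Type*} [Finite α]
    {σ : Perm α} (h : ∀ x, ∃ k : ℕ, (σ ^ 2 ^ k) x = x) : ∃ k : ℕ, σ ^ 2 ^ k = 1 := by
  have hev : ∀ x, ∀ᶠ k in Filter.atTop, (σ ^ 2 ^ k) x = x := fun x => by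
    obtain ⟨k, hk⟩ := h x
    refine Filter.eventually_atTop.2 ⟨k, fun m hm => ?_⟩
    obtain ⟨c, hc⟩ := pow_dvd_pow 2 hm
    rw [hc, pow_mul]
    exact Perm.pow_apply_eq_self_of_apply_eq_self hk c
  obtain ⟨k, hk⟩ := (Filter.eventually_all.2 hev).exists
  exact ⟨k, Equiv.ext hk⟩

namespace ColourPreserving

variable {G : Type*} [Group G] {S : Set G}

theorem inv {φ : G → G} (hφ : ColourPreserving S φ) : ColourPreserving S⁻¹ φ := by
  intro x s hs
  rcases hφ (x * s) s⁻¹ hs with h | h <;> rw [mul_inv_cancel_right] at h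
  · left; rw [h, inv_mul_cancel_right]
  · right; rw [h, inv_inv, mul_inv_cancel_right]

theorem comp {f g : G → G} (hf : ColourPreserving S f) (hg : ColourPreserving S g) :
    ColourPreserving S (f ∘ g) := by
  intro x s hs
  rcases hg x s hs with h | h <;> rw [Function.comp_apply, h]
  · exact hf (g x) s hs
  · simpa only [Function.comp_apply, inv_inv, or_comm] using
      hf.inv (g x) s⁻¹ (Set.inv_mem_inv.2 hs)

theorem iterate {f : G → G} (hf : ColourPreserving S f) (n : ℕ) : ColourPreserving S f^[n] := by
  induction n with
  | zero => exact fun _ _ _ => Or.inl rfl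
  | succ n ih => rw [Function.iterate_succ']; exact hf.comp ih

theorem pow {φ : Perm G} (hφ : ColourPreserving S φ) (n : ℕ) : ColourPreserving S ⇑(φ ^ n) := by
  rw [Perm.coe_pow]
  exact hφ.iterate n

theorem apply_apply_mul_eq {ψ : G → G} (hψ : ColourPreserving S ψ) (hinj : ψ.Injective) {x s : G}
    (hx : ψ x = x) (hs : s ∈ S) : ψ (ψ (x * s)) = x * s := by
  rcases hψ x s hs with h | h <;> rw [hx] at h
  · rw [h, h]
  · rcases hψ.inv x s⁻¹ (Set.inv_mem_inv.2 hs) with h' | h' <;> rw [hx] at h'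
    · have hss : x * s = x * s⁻¹ := hinj (h.trans h'.symm)
      rw [h, h', ← hss]
    · rw [h, h', inv_inv]

theorem exists_pow_two_pow_apply_mul_eq_self {φ : Perm G} (hφ : ColourPreserving S φ) {x s : G}
    (hs : s ∈ S) (hx : ∃ k : ℕ, (φ ^ 2 ^ k) x = x) : ∃ k : ℕ, (φ ^ 2 ^ k) (x * s) = x * s := by
  obtain ⟨k, hk⟩ := hx
  refine ⟨k + 1, ?_⟩
  rw [pow_succ, pow_mul, sq, Perm.mul_apply]
  exact (hφ.pow (2 ^ k)).apply_apply_mul_eq (φ ^ 2 ^ k).injective hk hs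

theorem exists_pow_two_pow_apply_eq_self {φ : Perm G} (hφ : ColourPreserving S φ) (h1 : φ 1 = 1)
    {x : G} (hx : x ∈ Subgroup.closure S) : ∃ k : ℕ, (φ ^ 2 ^ k) x = x := by
  induction hx using Subgroup.closure_induction_right with
  | one => exact ⟨0, by simpa using h1⟩
  | mul_right _ _ s hs ih => exact hφ.exists_pow_two_pow_apply_mul_eq_self hs ih
  | mul_inv_cancel _ _ s hs ih =>
    exact hφ.inv.exists_pow_two_pow_apply_mul_eq_self (Set.inv_mem_inv.2 hs) ih

end ColourPreserving

theorem stmt_4_general {G : Type*} [Group G] [Finite G] (S : Set G)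
    (hgen : Subgroup.closure S = ⊤) :
    ∀ φ : Equiv.Perm G, ColourPreserving S ⇑φ → φ 1 = 1 → ∃ k : ℕ, φ ^ (2 ^ k) = 1 := by
  intro φ hφ h1
  exact Perm.exists_pow_two_pow_eq_one_of_forall_apply fun x =>
    hφ.exists_pow_two_pow_apply_eq_self h1 (hgen ▸ Subgroup.mem_top x)

/-- The stabilizer of the identity in the group of colour-preserving automorphisms of a
connected Cayley graph is a `2`-group: each of its elements has `2`-power order. -/
theorem stmt_4 {G : Type*} [Group G] [Finite G] (S : Set G) (hS : S⁻¹ = S)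
    (hgen : Subgroup.closure S = ⊤) :
    ∀ φ : Equiv.Perm G, ColourPreserving S ⇑φ → φ 1 = 1 → ∃ k : ℕ, φ ^ (2 ^ k) = 1 :=
  stmt_4_general S hgen
end

section
/- Suppose a finite group G has a symmetric generating set S, an involution τ ∈ G, and a subset T ⊆ S such that: each element of S is either centralized or inverted by τ; t² = τ for all t ∈ T; the subgroup H = ⟨(S∖T) ∪ {τ}⟩ is proper in G; and either |G:H| > 2 or τ is not central in G. Then G is not CCA. -/
/-! Let `H = ⟨(S∖T) ∪ {τ}⟩` and let `φ` fix `H` pointwise and multiply every element outside `H`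
on the right by `τ`. An edge `x — xs` with both ends outside `H` keeps its colour because `τ`
centralizes or inverts `s`; an edge leaving `H` has `s ∈ T`, and then `sτ = s⁻¹`. So `φ` is a
colour-preserving automorphism fixing `1`, and were it affine it would be a group automorphism.
But a homomorphism of this shape sends the product of two elements outside `H` back into `H`
(so `|G:H| ≤ 2`) and makes `τ` commute with every element outside `H`, hence with all of `G`. -/

namespace Subgroup

variable {G : Type*} [Group G]

theorem index_le_two_of_mul_mem {H : Subgroup G}
    (h : ∀ x y, x ∉ H → y ∉ H → x * y ∈ H) : H.index ≤ 2 := by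
  by_cases hH : H = ⊤
  · simp [hH]
  · obtain ⟨a, ha⟩ := SetLike.exists_not_mem_of_ne_top H hH
    refine (index_eq_two_iff_exists_notMem_and.2 ⟨a, ha, fun b => ?_⟩).le
    by_cases hb : b ∈ H
    · exact Or.inr hb
    · exact Or.inl (h b a hb ha)

end Subgroup

theorem IsAffineMap.exists_mulEquiv_of_map_one {G : Type*} [Group G] {φ : G → G}
    (hφ : IsAffineMap φ) (h1 : φ 1 = 1) : ∃ α : G ≃* G, ∀ x, φ x = α x := by
  obtain ⟨α, g, hα⟩ := hφ
  have hg : g = 1 := α.injective (by simpa [h1] using (hα 1).symm)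
  exact ⟨α, fun x => by rw [hα, hg, one_mul]⟩

section MulOutside

variable {G : Type*} [Group G] (H : Subgroup G) (τ : G)

open Classical in
noncomputable def mulOutside (x : G) : G :=
  if x ∈ H then x else x * τ

variable {H τ}

theorem mulOutside_of_mem {x : G} (hx : x ∈ H) : mulOutside H τ x = x :=
  if_pos hx

theorem mulOutside_of_notMem {x : G} (hx : x ∉ H) : mulOutside H τ x = x * τ :=
  if_neg hx

theorem mulOutside_involutive (hτH : τ ∈ H) (hτ : τ ^ 2 = 1) :
    Function.Involutive (mulOutside H τ) := by
  intro x
  by_cases hx : x ∈ H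
  · rw [mulOutside_of_mem hx, mulOutside_of_mem hx]
  · have hxτ : x * τ ∉ H := fun h => hx (by simpa using H.mul_mem h (H.inv_mem hτH))
    rw [mulOutside_of_notMem hx, mulOutside_of_notMem hxτ, mul_assoc, ← sq, hτ, mul_one]

theorem colourPreserving_mulOutside {S : Set G} (hτ : τ ^ 2 = 1)
    (hcent : ∀ s ∈ S, τ * s * τ⁻¹ = s ∨ τ * s * τ⁻¹ = s⁻¹)
    (hsq : ∀ s ∈ S, s ∉ H → s ^ 2 = τ) : ColourPreserving S (mulOutside H τ) := by
  intro x s hs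
  by_cases hx : x ∈ H <;> by_cases hxs : x * s ∈ H
  · exact Or.inl (by rw [mulOutside_of_mem hx, mulOutside_of_mem hxs])
  · have hsH : s ∉ H := fun h => hxs (H.mul_mem hx h)
    -- `s ^ 4 = τ ^ 2 = 1`, hence `s * τ = s ^ 3 = s⁻¹`
    have hsτ : s * τ = s⁻¹ := by
      refine eq_inv_of_mul_eq_one_left ?_
      rw [← hsq s hs hsH, ← hτ, ← hsq s hs hsH]
      group
    refine Or.inr ?_
    rw [mulOutside_of_mem hx, mulOutside_of_notMem hxs, mul_assoc, hsτ]
  · have hsH : s ∉ H := fun h => hx (by simpa using H.mul_mem hxs (H.inv_mem h))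
    refine Or.inr ?_
    rw [mulOutside_of_mem hxs, mulOutside_of_notMem hx, ← hsq s hs hsH]
    group
  · rw [mulOutside_of_notMem hx, mulOutside_of_notMem hxs]
    rcases hcent s hs with hc | hc
    · exact Or.inl (by rw [mul_assoc, mul_assoc, mul_inv_eq_iff_eq_mul.mp hc])
    · have hτinv : τ⁻¹ = τ := inv_eq_of_mul_eq_one_right (by rw [← sq, hτ])
      refine Or.inr ?_
      rw [← hc, mul_assoc x τ, ← mul_assoc τ, ← mul_assoc τ, ← sq, hτ, one_mul, hτinv, mul_assoc]

variable {f : G →* G}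

theorem mul_mem_of_mulOutside_eq_monoidHom (hτ1 : τ ≠ 1) (hf : ∀ x, f x = mulOutside H τ x)
    {x y : G} (hx : x ∉ H) (hy : y ∉ H) : x * y ∈ H := by
  by_contra hxy
  have h := f.map_mul x y
  rw [hf, hf, hf, mulOutside_of_notMem hx, mulOutside_of_notMem hy,
    mulOutside_of_notMem hxy] at h
  exact hτ1 (by simpa [mul_assoc] using h)

theorem commute_of_mulOutside_eq_monoidHom (hτ : τ ^ 2 = 1) (hf : ∀ x, f x = mulOutside H τ x)
    (hH : H ≠ ⊤) (g : G) : Commute τ g := by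
  have hτinv : τ⁻¹ = τ := inv_eq_of_mul_eq_one_right (by rw [← sq, hτ])
  have outside : ∀ y, y ∉ H → Commute τ y := fun y hy => by
    have h := f.map_inv y
    rw [hf, hf, mulOutside_of_notMem hy, mulOutside_of_notMem (by simpa using hy), mul_inv_rev,
      hτinv] at h
    exact (Commute.inv_left_iff.mp h).symm
  obtain ⟨x, hx⟩ := SetLike.exists_not_mem_of_ne_top H hH
  by_cases hg : g ∈ H
  · have hxg : x * g ∉ H := fun h => hx (by simpa using H.mul_mem h (H.inv_mem hg))
    simpa using (outside x hx).inv_right.mul_right (outside _ hxg)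
  · exact outside g hg

end MulOutside

theorem stmt_7_general {G : Type*} [Group G] (S T : Set G) (τ : G)
    (hS : S⁻¹ = S) (hgen : Subgroup.closure S = ⊤)
    (hτ : τ ^ 2 = 1) (hτ1 : τ ≠ 1)
    (hcent : ∀ s ∈ S, τ * s * τ⁻¹ = s ∨ τ * s * τ⁻¹ = s⁻¹)
    (hT : ∀ t ∈ T, t ^ 2 = τ)
    (hH : Subgroup.closure ((S \ T) ∪ {τ}) ≠ ⊤)
    (hlast : 2 < (Subgroup.closure ((S \ T) ∪ {τ})).index ∨ τ ∉ Subgroup.center G) :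
    ¬ IsCCA G := by
  intro hcca
  set H := Subgroup.closure ((S \ T) ∪ {τ})
  have hτH : τ ∈ H := Subgroup.subset_closure (Or.inr rfl)
  have hsq : ∀ s ∈ S, s ∉ H → s ^ 2 = τ := fun s hs hsH =>
    hT s (by by_contra hsT; exact hsH (Subgroup.subset_closure (Or.inl ⟨hs, hsT⟩)))
  let φ := (mulOutside_involutive hτH hτ).toPerm
  have hφ1 : φ 1 = 1 := mulOutside_of_mem H.one_mem
  have hφ : ColourPreserving S φ := colourPreserving_mulOutside hτ hcent hsq
  obtain ⟨α, hα⟩ := (hcca S hS hgen φ hφ).exists_mulEquiv_of_map_one hφ1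
  have hf : ∀ x, α.toMonoidHom x = mulOutside H τ x := fun x => (hα x).symm
  rcases hlast with hidx | hcen
  · have := Subgroup.index_le_two_of_mul_mem fun x y hx hy =>
      mul_mem_of_mulOutside_eq_monoidHom hτ1 hf hx hy
    omega
  · exact hcen (Subgroup.mem_center_iff.2 fun g =>
      (commute_of_mulOutside_eq_monoidHom hτ hf hH g).symm.eq)

/-- Proposition 2.6 (notCCA-structure): the existence of a symmetric generating set `S`,
an involution `τ` centralizing or inverting each element of `S`, and a subset `T ⊆ S`
of square roots of `τ` with `⟨(S∖T) ∪ {τ}⟩` proper (and of index `> 2`, or `τ`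
non-central) implies `G` is not CCA. -/
theorem stmt_7 {G : Type*} [Group G] (S T : Set G) (τ : G) [Finite G]
    (hS : S⁻¹ = S) (hgen : Subgroup.closure S = ⊤)
    (hτ : τ ^ 2 = 1) (hτ1 : τ ≠ 1)
    (hcent : ∀ s ∈ S, τ * s * τ⁻¹ = s ∨ τ * s * τ⁻¹ = s⁻¹)
    (hTS : T ⊆ S) (hT : ∀ t ∈ T, t ^ 2 = τ)
    (hH : Subgroup.closure ((S \ T) ∪ {τ}) ≠ ⊤)
    (hlast : 2 < (Subgroup.closure ((S \ T) ∪ {τ})).index ∨ τ ∉ Subgroup.center G) :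
    ¬ IsCCA G :=
  stmt_7_general S T τ hS hgen hτ hτ1 hcent hT hH hlast
end

section
/- Every semidihedral group SemiD_{16n} = ⟨a, x | a^{8n} = x² = e, xa = a^{4n−1}x⟩ (n ≥ 1) is not CCA. -/
/-
Put `t = a x` and `z = a ^ (4n)`. Then `t² = z` is a central involution and `S = {x, t, t⁻¹}`
generates `G`. Let `K` be the centralizer of `x` and let `f = twistOff K z` fix `K` pointwise
and multiply by `z` on the right elsewhere. Right multiplication by `x ∈ K` preserves `K`, so
`x`-edges keep their colour; an edge `g — g t` that leaves `K` is sent to `g — g t⁻¹` because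
`t z = t⁻¹`. So `f` is a colour-preserving automorphism of `Cay(G;S)` fixing `1`, but it is not
a group homomorphism since `a² ∉ K`: hence it is not affine.
-/

section twistOff

variable {G : Type*} [Group G]

open Classical in
noncomputable def twistOff (K : Subgroup G) (z g : G) : G := if g ∈ K then g else g * z

variable {K : Subgroup G} {z g : G}

theorem twistOff_of_mem (hg : g ∈ K) : twistOff K z g = g := if_pos hg

theorem twistOff_of_notMem (hg : g ∉ K) : twistOff K z g = g * z := if_neg hg

theorem twistOff_involutive (hzK : z ∈ K) (hz : z * z = 1) :
    Function.Involutive (twistOff K z) := by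
  intro g
  by_cases hg : g ∈ K
  · rw [twistOff_of_mem hg, twistOff_of_mem hg]
  · have hgz : g * z ∉ K := by rwa [K.mul_mem_cancel_right hzK]
    rw [twistOff_of_notMem hg, twistOff_of_notMem hgz, mul_assoc, hz, mul_one]

theorem colourPreserving_twistOff {S : Set G} (hz : z * z = 1)
    (hS : ∀ s ∈ S, (s ∈ K ∧ Commute s z) ∨ s * s = z) :
    ColourPreserving S (twistOff K z) := by
  intro g s hs
  rcases hS s hs with ⟨hsK, hcomm⟩ | hsz
  · left
    by_cases hg : g ∈ K
    · have hgs : g * s ∈ K := by rwa [K.mul_mem_cancel_right hsK]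
      rw [twistOff_of_mem hg, twistOff_of_mem hgs]
    · have hgs : g * s ∉ K := by rwa [K.mul_mem_cancel_right hsK]
      rw [twistOff_of_notMem hg, twistOff_of_notMem hgs, mul_assoc, hcomm.eq, mul_assoc]
  · have hsz_inv : s * z = s⁻¹ := eq_inv_of_mul_eq_one_left <| by
      rw [← hz, ← hsz]; group
    have hz_sinv : z * s⁻¹ = s := by rw [← hsz, mul_inv_cancel_right]
    have hcomm : Commute s z := hsz ▸ (Commute.refl s).mul_right (Commute.refl s)
    by_cases hg : g ∈ K <;> by_cases hgs : g * s ∈ K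
    · left; rw [twistOff_of_mem hg, twistOff_of_mem hgs]
    · right; rw [twistOff_of_mem hg, twistOff_of_notMem hgs, mul_assoc, hsz_inv]
    · right; rw [twistOff_of_notMem hg, twistOff_of_mem hgs, mul_assoc, hz_sinv]
    · left
      rw [twistOff_of_notMem hg, twistOff_of_notMem hgs, mul_assoc, hcomm.eq, mul_assoc]

theorem IsAffineMap.map_mul_of_map_one {φ : G → G} (hφ : IsAffineMap φ) (h1 : φ 1 = 1)
    (x y : G) : φ (x * y) = φ x * φ y := by
  obtain ⟨α, g, hα⟩ := hφ
  have hg : g = 1 := α.injective <| by rw [map_one, ← h1, hα, mul_one]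
  simp only [hα, hg, one_mul, map_mul]

theorem not_isAffineMap_twistOff (hz1 : z ≠ 1) {a : G} (ha : a * a ∉ K) (haz : Commute a z) :
    ¬ IsAffineMap (twistOff K z) := by
  intro hφ
  have ha' : a ∉ K := fun h => ha (K.mul_mem h h)
  have hmul := hφ.map_mul_of_map_one (twistOff_of_mem K.one_mem) a a
  rw [twistOff_of_notMem ha, twistOff_of_notMem ha', haz.symm.mul_mul_mul_comm,
    ← mul_assoc] at hmul
  exact hz1 (mul_eq_left.mp hmul.symm)

theorem not_isCCA_of_twistOff {S : Set G} (hSinv : S⁻¹ = S) (hSgen : Subgroup.closure S = ⊤)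
    {a : G} (hzK : z ∈ K) (hz : z * z = 1) (hz1 : z ≠ 1) (ha : a * a ∉ K) (haz : Commute a z)
    (hS : ∀ s ∈ S, (s ∈ K ∧ Commute s z) ∨ s * s = z) : ¬ IsCCA G := fun hG =>
  not_isAffineMap_twistOff hz1 ha haz <| by
    simpa using hG S hSinv hSgen (twistOff_involutive hzK hz).toPerm
      (by simpa using colourPreserving_twistOff hz hS)

end twistOff

section Semidihedral

variable {G : Type*} [Group G] {n m : ℕ} {a x : G}

theorem closure_insert_mul_eq_top (hgen : Subgroup.closure {a, x} = ⊤) :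
    Subgroup.closure {x, a * x, (a * x)⁻¹} = ⊤ := by
  refine eq_top_iff.mpr (hgen ▸ (Subgroup.closure_le _).mpr ?_)
  set H := Subgroup.closure {x, a * x, (a * x)⁻¹}
  have hx : x ∈ H := Subgroup.subset_closure (by simp)
  have hax : a * x ∈ H := Subgroup.subset_closure (by simp)
  have ha : a ∈ H := by simpa using mul_mem hax (inv_mem hx)
  exact Set.insert_subset ha (Set.singleton_subset_iff.mpr hx)

theorem conj_pow_eq_pow_mul_of_mul_eq (hrel : x * a = a ^ m * x) (k : ℕ) :
    x * a ^ k * x⁻¹ = a ^ (m * k) := by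
  rw [← conj_pow, mul_inv_eq_of_eq_mul hrel, pow_mul]

theorem commute_pow_four_mul (hn : 1 ≤ n) (haord : orderOf a = 8 * n)
    (hrel : x * a = a ^ (4 * n - 1) * x) : Commute x (a ^ (4 * n)) := by
  obtain ⟨k, rfl⟩ := Nat.exists_eq_add_of_le' hn
  have hexp : (4 * (k + 1) - 1) * (4 * (k + 1)) = 4 * (k + 1) + 8 * (k + 1) * (2 * k + 1) := by
    rw [show 4 * (k + 1) - 1 = 4 * k + 3 by omega]; ring
  have hconj : x * a ^ (4 * (k + 1)) * x⁻¹ = a ^ (4 * (k + 1)) := by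
    rw [conj_pow_eq_pow_mul_of_mul_eq hrel, pow_eq_pow_iff_modEq, haord, hexp]
    exact Nat.add_mul_mod_self_left _ _ _
  exact mul_inv_eq_iff_eq_mul.mp hconj

theorem mul_self_notMem_centralizer (hn : 1 ≤ n) (haord : orderOf a = 8 * n)
    (hrel : x * a = a ^ (4 * n - 1) * x) : a * a ∉ Subgroup.centralizer {x} := by
  rw [Subgroup.mem_centralizer_singleton_iff, ← sq]
  intro hcomm
  have hconj : x * a ^ 2 * x⁻¹ = a ^ 2 := mul_inv_eq_of_eq_mul hcomm.symm
  rw [conj_pow_eq_pow_mul_of_mul_eq hrel, pow_eq_pow_iff_modEq, haord, Nat.ModEq,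
    Nat.mod_eq_of_lt (by omega), Nat.mod_eq_of_lt (by omega)] at hconj
  omega

theorem mul_self_eq_pow_four_mul (hx : x⁻¹ = x) (hrel : x * a = a ^ (4 * n - 1) * x)
    (hn : 1 ≤ n) : a * x * (a * x) = a ^ (4 * n) := by
  have hconj : x * a * x = a ^ (4 * n - 1) := by
    simpa only [hx] using mul_inv_eq_of_eq_mul hrel
  rw [mul_assoc, ← mul_assoc x, hconj, ← pow_succ', show 4 * n - 1 + 1 = 4 * n by omega]

end Semidihedral

theorem stmt_15_general {G : Type*} [Group G] (n : ℕ) (hn : 1 ≤ n) (a x : G)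
    (haord : orderOf a = 8 * n)
    (hx : x ^ 2 = 1) (hrel : x * a = a ^ (4 * n - 1) * x)
    (hgen : Subgroup.closure {a, x} = ⊤) :
    ¬ IsCCA G := by
  have hxinv : x⁻¹ = x := inv_eq_of_mul_eq_one_right (by rw [← sq, hx])
  have hz : a ^ (4 * n) * a ^ (4 * n) = 1 := by
    rw [← pow_add, show 4 * n + 4 * n = 8 * n by omega, ← haord, pow_orderOf_eq_one]
  have hzx := commute_pow_four_mul hn haord hrel
  have ht := mul_self_eq_pow_four_mul hxinv hrel hn
  refine not_isCCA_of_twistOff (S := {x, a * x, (a * x)⁻¹}) (K := Subgroup.centralizer {x})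
    ?_ ?_ (Subgroup.mem_centralizer_singleton_iff.mpr hzx.eq.symm) hz
    (pow_ne_one_of_lt_orderOf (by omega) (by omega))
    (mul_self_notMem_centralizer hn haord hrel) (Commute.self_pow a _) ?_
  · rw [Set.inv_insert, Set.inv_insert, Set.inv_singleton, inv_inv, hxinv, Set.pair_comm]
  · exact closure_insert_mul_eq_top hgen
  · rintro s (rfl | rfl | rfl)
    · exact Or.inl ⟨Subgroup.mem_centralizer_singleton_iff.mpr rfl, hzx⟩
    · exact Or.inr ht
    · exact Or.inr (by rw [← mul_inv_rev, ht, inv_eq_of_mul_eq_one_right hz])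

/-- Every semidihedral group `SemiD_{16n} = ⟨a, x | a^{8n} = x² = e, xa = a^{4n−1}x⟩`
(`n ≥ 1`) is not CCA. -/
theorem stmt_15 {G : Type*} [Group G] [Finite G] (n : ℕ) (hn : 1 ≤ n) (a x : G)
    (hcard : Nat.card G = 16 * n) (haord : orderOf a = 8 * n)
    (hx : x ^ 2 = 1) (hx1 : x ≠ 1) (hrel : x * a = a ^ (4 * n - 1) * x)
    (hgen : Subgroup.closure {a, x} = ⊤) :
    ¬ IsCCA G :=
  stmt_15_general n hn a x haord hx hrel hgen
end
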